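/- arXiv:2001.11598 — 2 statements merged into one kernel-verified Lean document; each statement's English description precedes it below -/
import Mathlib

section
/- Let A : ℝ → ℝ be continuous and strictly positive. Then 2 ∫_0^∞ ∫_0^∞ exp(−2 ∫_y^{y+z} A(u) du) dz dy ≤ ∫_0^∞ 1/A(y) dy. In particular if ∫_0^∞ 1/A < ∞ the double integral is finite. -/
/-!
With `F` a primitive of `A`, the exponent is `-2 (F x - F y)` for `x = y + z`, and the double
integral runs over the triangle `0 < y < x`. The AM-GM inequality `2 ≤ A x / A y + A y / A x`
splits the kernel into two parts. In the first one integrates `A x exp (-2 (F x - F y))` in `x`,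
in the second (after Fubini) `A y exp (-2 (F x - F y))` in `y`; the substitution `s = F` turns
either into an integral of `exp (-2 s)` over part of a half-line, hence at most `1/2`.
-/

open Real MeasureTheory Set ENNReal

theorem lintegral_Ici_ofReal_exp_mul {a : ℝ} (ha : a < 0) :
    ∫⁻ t in Ici 0, ENNReal.ofReal (exp (a * t)) = ENNReal.ofReal (-a⁻¹) := by
  rw [setLIntegral_congr Ioi_ae_eq_Ici.symm, ← ofReal_integral_eq_lintegral_ofReal
    (integrableOn_exp_mul_Ioi ha 0) (ae_of_all _ fun t => (exp_pos _).le),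
    integral_exp_mul_Ioi ha, mul_zero, exp_zero, neg_div, one_div]

theorem lintegral_Ioi_comp_const_add (f : ℝ → ℝ≥0∞) (y : ℝ) :
    ∫⁻ z in Ioi 0, f (y + z) = ∫⁻ x in Ioi y, f x := by
  have := (measurePreserving_add_left volume y).setLIntegral_comp_preimage_emb
    (measurableEmbedding_addLeft y) f (Ioi y)
  rwa [preimage_const_add_Ioi, sub_self] at this

section ChangeOfVariables

variable {s : Set ℝ} {G g : ℝ → ℝ} {a : ℝ}

theorem MonotoneOn.lintegral_deriv_mul_exp_mul_le (hG : MonotoneOn G s) (hs : MeasurableSet s)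
    (hG' : ∀ x ∈ s, HasDerivWithinAt G (g x) s x) (hG0 : ∀ x ∈ s, 0 ≤ G x) (ha : a < 0) :
    ∫⁻ x in s, ENNReal.ofReal (g x) * ENNReal.ofReal (exp (a * G x)) ≤ ENNReal.ofReal (-a⁻¹) := by
  rw [← lintegral_image_eq_lintegral_deriv_mul_of_monotoneOn hs hG' hG
    fun t => ENNReal.ofReal (exp (a * t)), ← lintegral_Ici_ofReal_exp_mul ha]
  exact lintegral_mono_set (image_subset_iff.2 hG0)

theorem AntitoneOn.lintegral_neg_deriv_mul_exp_mul_le (hG : AntitoneOn G s)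
    (hs : MeasurableSet s) (hG' : ∀ x ∈ s, HasDerivWithinAt G (g x) s x)
    (hG0 : ∀ x ∈ s, 0 ≤ G x) (ha : a < 0) :
    ∫⁻ x in s, ENNReal.ofReal (-g x) * ENNReal.ofReal (exp (a * G x)) ≤
      ENNReal.ofReal (-a⁻¹) := by
  rw [← lintegral_image_eq_lintegral_deriv_mul_of_antitoneOn hs hG' hG
    fun t => ENNReal.ofReal (exp (a * t)), ← lintegral_Ici_ofReal_exp_mul ha]
  exact lintegral_mono_set (image_subset_iff.2 hG0)

end ChangeOfVariables

section Kernel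

variable {A F : ℝ → ℝ} (hF : ∀ x, HasDerivAt F (A x) x) (hA : ∀ x, 0 ≤ A x)
include hF hA

theorem lintegral_Ioi_mul_exp_sub_le (y : ℝ) :
    ∫⁻ x in Ioi y, ENNReal.ofReal (A x) * ENNReal.ofReal (exp (-2 * (F x - F y))) ≤ 2⁻¹ := by
  have hmono := monotone_of_hasDerivAt_nonneg hF hA
  have hG : MonotoneOn (fun x => F x - F y) (Ioi y) :=
    fun _ _ _ _ h => sub_le_sub_right (hmono h) _
  have := hG.lintegral_deriv_mul_exp_mul_le measurableSet_Ioi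
    (fun x _ => ((hF x).sub_const (F y)).hasDerivWithinAt)
    (fun x hx => sub_nonneg.2 (hmono (le_of_lt hx))) (by norm_num : (-2 : ℝ) < 0)
  simpa using this

theorem lintegral_Iio_mul_exp_sub_le (x : ℝ) :
    ∫⁻ y in Iio x, ENNReal.ofReal (A y) * ENNReal.ofReal (exp (-2 * (F x - F y))) ≤ 2⁻¹ := by
  have hmono := monotone_of_hasDerivAt_nonneg hF hA
  have hG : AntitoneOn (fun y => F x - F y) (Iio x) :=
    fun _ _ _ _ h => sub_le_sub_left (hmono h) _
  have := hG.lintegral_neg_deriv_mul_exp_mul_le measurableSet_Iio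
    (fun y _ => ((hF y).const_sub (F x)).hasDerivWithinAt)
    (fun y hy => sub_nonneg.2 (hmono (le_of_lt hy))) (by norm_num : (-2 : ℝ) < 0)
  simpa using this

end Kernel

theorem measurableSet_lt_fst_lt_snd (a : ℝ) :
    MeasurableSet {p : ℝ × ℝ | a < p.1 ∧ p.1 < p.2} :=
  (measurableSet_lt measurable_const measurable_fst).inter
    (measurableSet_lt measurable_fst measurable_snd)

section Triangle

variable {f : ℝ × ℝ → ℝ≥0∞} (hf : Measurable f) (a : ℝ)
include hf

theorem lintegral_Ioi_lintegral_Ioi_eq_setLIntegral :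
    ∫⁻ y in Ioi a, ∫⁻ x in Ioi y, f (y, x) = ∫⁻ p in {p : ℝ × ℝ | a < p.1 ∧ p.1 < p.2}, f p := by
  have hS := measurableSet_lt_fst_lt_snd a
  rw [← lintegral_indicator hS, Measure.volume_eq_prod,
    lintegral_prod _ (hf.indicator hS).aemeasurable, ← lintegral_indicator measurableSet_Ioi]
  refine lintegral_congr fun y => ?_
  by_cases hy : a < y
  · rw [indicator_of_mem (mem_Ioi.2 hy), ← lintegral_indicator measurableSet_Ioi]
    simp [indicator_apply, hy]
  · simp [hy]

theorem lintegral_Ioi_lintegral_Ioo_eq_setLIntegral :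
    ∫⁻ x in Ioi a, ∫⁻ y in Ioo a x, f (y, x) = ∫⁻ p in {p : ℝ × ℝ | a < p.1 ∧ p.1 < p.2}, f p := by
  have hS := measurableSet_lt_fst_lt_snd a
  rw [← lintegral_indicator hS, Measure.volume_eq_prod,
    lintegral_prod_symm _ (hf.indicator hS).aemeasurable, ← lintegral_indicator measurableSet_Ioi]
  refine lintegral_congr fun x => ?_
  by_cases hx : a < x
  · rw [indicator_of_mem (mem_Ioi.2 hx), ← lintegral_indicator measurableSet_Ioo]
    simp [indicator_apply]
  · have hempty : ∀ y, ¬(a < y ∧ y < x) := fun y h => hx (h.1.trans h.2)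
    simp [hx, hempty]

end Triangle

theorem two_mul_ofReal_le_inv_mul_add_inv_mul {a b k : ℝ} (ha : 0 < a) (hb : 0 < b)
    (hk : 0 ≤ k) :
    2 * ENNReal.ofReal k ≤ ENNReal.ofReal a⁻¹ * (ENNReal.ofReal b * ENNReal.ofReal k) +
      ENNReal.ofReal b⁻¹ * (ENNReal.ofReal a * ENNReal.ofReal k) := by
  have hreal : 2 * k ≤ a⁻¹ * (b * k) + b⁻¹ * (a * k) := by
    have : a⁻¹ * (b * k) + b⁻¹ * (a * k) - 2 * k = (a - b) ^ 2 / (a * b) * k := by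
      field_simp; ring
    rw [← sub_nonneg, this]
    positivity
  rw [← ofReal_mul hb.le, ← ofReal_mul ha.le, ← ofReal_mul (inv_nonneg.2 ha.le),
    ← ofReal_mul (inv_nonneg.2 hb.le), ← ofReal_add (by positivity) (by positivity),
    ← ofReal_ofNat 2, ← ofReal_mul zero_le_two]
  exact ofReal_le_ofReal hreal

theorem two_mul_lintegral_lintegral_exp_sub_le {A F : ℝ → ℝ} (hF : ∀ x, HasDerivAt F (A x) x)
    (hA : ∀ x, 0 < A x) (hAm : Measurable A) (a : ℝ) :
    2 * ∫⁻ y in Ioi a, ∫⁻ x in Ioi y, ENNReal.ofReal (exp (-2 * (F x - F y))) ≤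
      ∫⁻ y in Ioi a, ENNReal.ofReal (A y)⁻¹ := by
  have hFm : Measurable F :=
    (continuous_iff_continuousAt.2 fun x => (hF x).continuousAt).measurable
  set K : ℝ × ℝ → ℝ≥0∞ := fun p => ENNReal.ofReal (exp (-2 * (F p.2 - F p.1)))
  have hKm : Measurable K := by fun_prop
  set S := {p : ℝ × ℝ | a < p.1 ∧ p.1 < p.2}
  calc 2 * ∫⁻ y in Ioi a, ∫⁻ x in Ioi y, K (y, x)
      = ∫⁻ p in S, 2 * K p := by
        rw [lintegral_Ioi_lintegral_Ioi_eq_setLIntegral hKm, lintegral_const_mul _ hKm]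
    _ ≤ ∫⁻ p in S, (ENNReal.ofReal (A p.1)⁻¹ * (ENNReal.ofReal (A p.2) * K p) +
          ENNReal.ofReal (A p.2)⁻¹ * (ENNReal.ofReal (A p.1) * K p)) :=
        lintegral_mono fun _ =>
          two_mul_ofReal_le_inv_mul_add_inv_mul (hA _) (hA _) (exp_pos _).le
    _ = (∫⁻ y in Ioi a, ∫⁻ x in Ioi y,
            ENNReal.ofReal (A y)⁻¹ * (ENNReal.ofReal (A x) * K (y, x))) +
          ∫⁻ x in Ioi a, ∫⁻ y in Ioo a x,
            ENNReal.ofReal (A x)⁻¹ * (ENNReal.ofReal (A y) * K (y, x)) := by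
        rw [lintegral_add_left (by fun_prop)]
        congr 1
        · exact (lintegral_Ioi_lintegral_Ioi_eq_setLIntegral (by fun_prop) a).symm
        · exact (lintegral_Ioi_lintegral_Ioo_eq_setLIntegral (by fun_prop) a).symm
    _ ≤ (∫⁻ y in Ioi a, ENNReal.ofReal (A y)⁻¹ * 2⁻¹) +
          ∫⁻ x in Ioi a, ENNReal.ofReal (A x)⁻¹ * 2⁻¹ := by
        gcongr with y x
        · rw [lintegral_const_mul' _ _ ofReal_ne_top]
          gcongr
          exact lintegral_Ioi_mul_exp_sub_le hF (fun x => (hA x).le) y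
        · rw [lintegral_const_mul' _ _ ofReal_ne_top]
          gcongr
          exact (lintegral_mono_set Ioo_subset_Iio_self).trans
            (lintegral_Iio_mul_exp_sub_le hF (fun x => (hA x).le) x)
    _ = ∫⁻ y in Ioi a, ENNReal.ofReal (A y)⁻¹ := by
        rw [lintegral_mul_const' _ _ (by simp), ← div_eq_mul_inv, ENNReal.add_halves]

theorem stmt10 (A : ℝ → ℝ) (hA : Continuous A) (hpos : ∀ y, 0 < A y) :
    2 * (∫⁻ y in Set.Ioi (0 : ℝ), ∫⁻ z in Set.Ioi (0 : ℝ),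
          ENNReal.ofReal (Real.exp (-2 * ∫ u in y..(y + z), A u)))
        ≤ ∫⁻ y in Set.Ioi (0 : ℝ), ENNReal.ofReal (A y)⁻¹ ∧
      ((∫⁻ y in Set.Ioi (0 : ℝ), ENNReal.ofReal (A y)⁻¹) < ⊤ →
        (∫⁻ y in Set.Ioi (0 : ℝ), ∫⁻ z in Set.Ioi (0 : ℝ),
          ENNReal.ofReal (Real.exp (-2 * ∫ u in y..(y + z), A u))) < ⊤) := by
  set F : ℝ → ℝ := fun x => ∫ u in (0 : ℝ)..x, A u
  have hF : ∀ x, HasDerivAt F (A x) x := fun x => (hA.integral_hasStrictDerivAt 0 x).hasDerivAt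
  have hsub : ∀ y z, ∫ u in y..(y + z), A u = F (y + z) - F y := fun y z =>
    (intervalIntegral.integral_interval_sub_left (hA.intervalIntegrable 0 _)
      (hA.intervalIntegrable 0 _)).symm
  have hshift : (∫⁻ y in Ioi (0 : ℝ), ∫⁻ z in Ioi (0 : ℝ),
      ENNReal.ofReal (exp (-2 * ∫ u in y..(y + z), A u))) =
      ∫⁻ y in Ioi 0, ∫⁻ x in Ioi y, ENNReal.ofReal (exp (-2 * (F x - F y))) :=
    lintegral_congr fun y => by
      simp only [hsub]
      exact lintegral_Ioi_comp_const_add (fun x => ENNReal.ofReal (exp (-2 * (F x - F y)))) y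
  have key := two_mul_lintegral_lintegral_exp_sub_le hF hpos hA.measurable 0
  rw [hshift]
  exact ⟨key, fun hfin =>
    ((le_mul_of_one_le_left zero_le one_le_two).trans key).trans_lt hfin⟩
end

section
/- Under Assumption (|b(x)| ≤ C(1+|x|^m), m > 1, η > (m−1)/2, d ≥ 2, 0 < α < 1), the quantity LV(x) = α(log|x|)^(α−1)( b(x)·x/|x|² − ½|x|^(2η)((d−2)/η + (1−α)/(η² log|x|)) ) satisfies LV(x) ≤ (log|x|)^(α−1)( c₁|x|^(m−1) − c₂ |x|^(2η)/log|x| ) for all |x| > max(2,R), for suitable constants c₁, c₂ > 0; consequently LV(x) → −∞ as |x| → ∞ and LV(x) < 0 for |x| sufficiently large. -/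
/-!
Cauchy–Schwarz and the growth bound give `b(x)·x/|x|² ≤ 2C|x|^(m-1)`, and the dimension term
`(d-2)/η` is nonnegative, so it can be dropped; this leaves the bound with `c₁ = 2αC + 1` and
`c₂ = α(1-α)/(2η²)`. Writing `t = |x|`, the bound equals
`t^(2η) (log t)^(α-2) · (c₁ log t / t^(2η-m+1) - c₂)`: the first factor tends to `+∞` and the
second to `-c₂ < 0` because `2η > m - 1`, so `LV → -∞`.
-/

open Real Filter

theorem tendsto_rpow_mul_log_rpow_atTop {q : ℝ} (hq : 0 < q) (s : ℝ) :
    Tendsto (fun t : ℝ => t ^ q * log t ^ s) atTop atTop := by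
  refine ((tendsto_exp_mul_div_rpow_atTop (-s) q hq).comp tendsto_log_atTop).congr' ?_
  filter_upwards [eventually_gt_atTop 1] with t ht
  simp only [Function.comp_apply, rpow_neg (log_pos ht).le, div_inv_eq_mul,
    rpow_def_of_pos (zero_lt_one.trans ht), mul_comm q]

theorem tendsto_log_rpow_mul_sub_div_log_atBot {a p q c₁ c₂ : ℝ} (hpq : p < q) (hq : 0 < q)
    (hc₂ : 0 < c₂) :
    Tendsto (fun t : ℝ => log t ^ a * (c₁ * t ^ p - c₂ * t ^ q / log t)) atTop atBot := by
  have hgap : Tendsto (fun t : ℝ => c₁ * (log t / t ^ (q - p)) - c₂) atTop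
      (nhds (c₁ * 0 - c₂)) :=
    ((isLittleO_log_rpow_atTop (sub_pos.2 hpq)).tendsto_div_nhds_zero.const_mul c₁).sub_const c₂
  refine ((tendsto_rpow_mul_log_rpow_atTop hq (a - 1)).atTop_mul_neg (by linarith) hgap).congr' ?_
  filter_upwards [eventually_gt_atTop 1] with t ht
  have ht0 : 0 < t := zero_lt_one.trans ht
  have hL : 0 < log t := log_pos ht
  have hlog : log t ^ (a - 1) * log t = log t ^ a := by
    rw [rpow_sub_one hL.ne']; field_simp
  have hpow : t ^ q / t ^ (q - p) = t ^ p := by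
    rw [← rpow_sub ht0]; ring_nf
  have : t ^ (q - p) ≠ 0 := (rpow_pos_of_pos ht0 _).ne'
  rw [← hlog, ← hpow]
  field_simp

theorem inner_div_norm_sq_le_of_norm_le {E : Type*} [NormedAddCommGroup E]
    [InnerProductSpace ℝ E] {C m : ℝ} (hC : 0 ≤ C) (hm : 0 ≤ m) {x y : E} (hx : 1 ≤ ‖x‖)
    (hy : ‖y‖ ≤ C * (1 + ‖x‖ ^ m)) :
    inner ℝ y x / ‖x‖ ^ 2 ≤ 2 * C * ‖x‖ ^ (m - 1) := by
  have hx0 : 0 < ‖x‖ := zero_lt_one.trans_le hx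
  have hxm : 1 ≤ ‖x‖ ^ m := one_le_rpow hx hm
  have hsplit : ‖x‖ ^ m = ‖x‖ ^ (m - 1) * ‖x‖ := by
    rw [← rpow_add_one hx0.ne']; ring_nf
  rw [div_le_iff₀ (by positivity)]
  calc inner ℝ y x ≤ ‖y‖ * ‖x‖ := real_inner_le_norm y x
    _ ≤ C * (1 + ‖x‖ ^ m) * ‖x‖ := by gcongr
    _ ≤ C * (2 * ‖x‖ ^ m) * ‖x‖ := by gcongr; linarith
    _ = 2 * C * ‖x‖ ^ (m - 1) * ‖x‖ ^ 2 := by rw [hsplit]; ring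

theorem lyapunov_generator_le {α η m C D k L t c₁ : ℝ} (hα : 0 ≤ α) (hη : η ≠ 0)
    (hk : 0 ≤ k) (hL : 0 < L) (ht : 0 < t) (hD : D ≤ 2 * C * t ^ (m - 1))
    (hc₁ : 2 * α * C ≤ c₁) :
    α * L ^ (α - 1) * (D - 1 / 2 * t ^ (2 * η) * (k + (1 - α) / (η ^ 2 * L)))
      ≤ L ^ (α - 1) * (c₁ * t ^ (m - 1) - α * (1 - α) / (2 * η ^ 2) * t ^ (2 * η) / L) := by
  have htη : 0 < t ^ (2 * η) := rpow_pos_of_pos ht _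
  calc α * L ^ (α - 1) * (D - 1 / 2 * t ^ (2 * η) * (k + (1 - α) / (η ^ 2 * L)))
      ≤ α * L ^ (α - 1) *
          (2 * C * t ^ (m - 1) - 1 / 2 * t ^ (2 * η) * ((1 - α) / (η ^ 2 * L))) := by
        gcongr
        nlinarith [mul_nonneg htη.le hk]
    _ = L ^ (α - 1) *
          (2 * α * C * t ^ (m - 1) - α * (1 - α) / (2 * η ^ 2) * t ^ (2 * η) / L) := by
        field_simp
    _ ≤ L ^ (α - 1) *
          (c₁ * t ^ (m - 1) - α * (1 - α) / (2 * η ^ 2) * t ^ (2 * η) / L) := by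
        gcongr

theorem stmt16_general (d : ℕ) (hd : 2 ≤ d) (m η α C R : ℝ) (hm : 1 < m)
    (hη : (m - 1) / 2 < η) (hα1 : 0 < α) (hα2 : α < 1) (hC : 0 ≤ C)
    (b : EuclideanSpace ℝ (Fin d) → EuclideanSpace ℝ (Fin d))
    (hb : ∀ x : EuclideanSpace ℝ (Fin d), ‖b x‖ ≤ C * (1 + ‖x‖ ^ m))
    (LV : EuclideanSpace ℝ (Fin d) → ℝ)
    (hLV : ∀ x : EuclideanSpace ℝ (Fin d), max 2 R < ‖x‖ →
      LV x = α * Real.log ‖x‖ ^ (α - 1) *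
        ((inner ℝ (b x) x : ℝ) / ‖x‖ ^ 2
          - (1 / 2) * ‖x‖ ^ (2 * η) *
              (((d : ℝ) - 2) / η + (1 - α) / (η ^ 2 * Real.log ‖x‖)))) :
    (∃ c₁ > (0 : ℝ), ∃ c₂ > (0 : ℝ), ∀ x : EuclideanSpace ℝ (Fin d), max 2 R < ‖x‖ →
        LV x ≤ Real.log ‖x‖ ^ (α - 1) *
          (c₁ * ‖x‖ ^ (m - 1) - c₂ * ‖x‖ ^ (2 * η) / Real.log ‖x‖)) ∧
      (∀ M : ℝ, ∃ r : ℝ, ∀ x : EuclideanSpace ℝ (Fin d), r < ‖x‖ → LV x ≤ M) ∧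
      (∃ r : ℝ, ∀ x : EuclideanSpace ℝ (Fin d), r < ‖x‖ → LV x < 0) := by
  have hη0 : 0 < η := by linarith
  have hdη : 0 ≤ ((d : ℝ) - 2) / η := div_nonneg (by norm_num; exact_mod_cast hd) hη0.le
  set c₁ := 2 * α * C + 1
  set c₂ := α * (1 - α) / (2 * η ^ 2)
  have hc₂ : 0 < c₂ := div_pos (mul_pos hα1 (by linarith)) (by positivity)
  have hbound : ∀ x : EuclideanSpace ℝ (Fin d), max 2 R < ‖x‖ →
      LV x ≤ log ‖x‖ ^ (α - 1) * (c₁ * ‖x‖ ^ (m - 1) - c₂ * ‖x‖ ^ (2 * η) / log ‖x‖) := by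
    intro x hx
    have hx2 : 2 < ‖x‖ := (le_max_left 2 R).trans_lt hx
    rw [hLV x hx]
    exact lyapunov_generator_le hα1.le hη0.ne' hdη (log_pos (by linarith)) (by linarith)
      (inner_div_norm_sq_le_of_norm_le hC (by linarith) (by linarith) (hb x)) (by linarith)
  have hlim : ∀ M : ℝ, ∃ r : ℝ, ∀ x : EuclideanSpace ℝ (Fin d), r < ‖x‖ → LV x ≤ M := by
    intro M
    obtain ⟨r, hr⟩ := eventually_atTop.1 <|
      (tendsto_log_rpow_mul_sub_div_log_atBot (a := α - 1) (p := m - 1) (q := 2 * η)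
        (c₁ := c₁) (by linarith) (by linarith) hc₂).eventually_le_atBot M
    exact ⟨max r (max 2 R), fun x hx =>
      (hbound x ((le_max_right _ _).trans_lt hx)).trans (hr _ ((le_max_left _ _).trans hx.le))⟩
  refine ⟨⟨c₁, by positivity, c₂, hc₂, hbound⟩, hlim, ?_⟩
  obtain ⟨r, hr⟩ := hlim (-1)
  exact ⟨r, fun x hx => (hr x hx).trans_lt (by norm_num)⟩

theorem stmt16 (d : ℕ) (hd : 2 ≤ d) (m η α C R : ℝ) (hm : 1 < m)
    (hη : (m - 1) / 2 < η) (hα1 : 0 < α) (hα2 : α < 1) (hC : 0 ≤ C) (hR : 0 < R)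
    (b : EuclideanSpace ℝ (Fin d) → EuclideanSpace ℝ (Fin d))
    (hb : ∀ x : EuclideanSpace ℝ (Fin d), ‖b x‖ ≤ C * (1 + ‖x‖ ^ m))
    (LV : EuclideanSpace ℝ (Fin d) → ℝ)
    (hLV : ∀ x : EuclideanSpace ℝ (Fin d), max 2 R < ‖x‖ →
      LV x = α * Real.log ‖x‖ ^ (α - 1) *
        ((inner ℝ (b x) x : ℝ) / ‖x‖ ^ 2
          - (1 / 2) * ‖x‖ ^ (2 * η) *
              (((d : ℝ) - 2) / η + (1 - α) / (η ^ 2 * Real.log ‖x‖)))) :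
    (∃ c₁ > (0 : ℝ), ∃ c₂ > (0 : ℝ), ∀ x : EuclideanSpace ℝ (Fin d), max 2 R < ‖x‖ →
        LV x ≤ Real.log ‖x‖ ^ (α - 1) *
          (c₁ * ‖x‖ ^ (m - 1) - c₂ * ‖x‖ ^ (2 * η) / Real.log ‖x‖)) ∧
      (∀ M : ℝ, ∃ r : ℝ, ∀ x : EuclideanSpace ℝ (Fin d), r < ‖x‖ → LV x ≤ M) ∧
      (∃ r : ℝ, ∀ x : EuclideanSpace ℝ (Fin d), r < ‖x‖ → LV x < 0) :=
  stmt16_general d hd m η α C R hm hη hα1 hα2 hC b hb LV hLV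
end
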